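/- arXiv:2211.11859 — 2 statements merged into one kernel-verified Lean document; each statement's English description precedes it below -/
import Mathlib

section
/- For every real m > 0 and all reals a, b with 0 ≤ b < a, the integral ∫₀^∞ e^{−aγ} · (∑_{i=0}^∞ ((m)_i/(i!)²) (bγ)^i) dγ converges and equals a^{m−1}/(a−b)^m. (Equivalently: the Laplace transform of the Kummer function ₁F₁(m, 1, b·) at the point a equals a^{m−1}/(a−b)^m.) -/
set_option maxHeartbeats 1000000

open MeasureTheory Set

/-- Pochhammer symbol (rising factorial) `(m)_i = m(m+1)⋯(m+i−1)`. -/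
noncomputable def poch (m : ℝ) (i : ℕ) : ℝ := ∏ j ∈ Finset.range i, (m + j)

/-- Kummer confluent hypergeometric function `₁F₁(m, 1, z) = ∑_{i=0}^∞ ((m)_i/(i!)²) z^i`. -/
noncomputable def kummerM (m z : ℝ) : ℝ :=
  ∑' i : ℕ, poch m i / ((Nat.factorial i : ℝ) ^ 2) * z ^ i

open Real Filter Topology

lemma poch_zero (m : ℝ) : poch m 0 = 1 := by simp [poch]

lemma poch_succ (m : ℝ) (n : ℕ) : poch m (n + 1) = poch m n * (m + n) :=
  Finset.prod_range_succ _ _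

lemma poch_nonneg {m : ℝ} (hm : 0 ≤ m) (n : ℕ) : 0 ≤ poch m n :=
  Finset.prod_nonneg fun j _ => by positivity

lemma poch_le {m : ℝ} (hm : 0 < m) (n : ℕ) :
    poch m n ≤ (n.factorial : ℝ) * ((n : ℝ) + 1) ^ (⌈m⌉₊) := by
  set K := ⌈m⌉₊ with hK
  have hmK : m ≤ (K : ℝ) := Nat.le_ceil m
  induction n with
  | zero => simp [poch_zero]
  | succ n ih =>
    set x : ℝ := (n : ℝ) + 1 with hx
    have hx0 : (0 : ℝ) < x := by positivity
    have hber : 1 + (K : ℝ) * (1 / x) ≤ (1 + 1 / x) ^ K :=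
      one_add_mul_le_pow (by nlinarith [one_div_pos.2 hx0] : (-2 : ℝ) ≤ 1 / x) K
    have hxx : x * (1 + 1 / x) = x + 1 := by field_simp
    have key : x ^ K * ((K : ℝ) + n) ≤ x * (x + 1) ^ K := by
      have h1 : x ^ K * (1 + (K : ℝ) * (1 / x)) ≤ x ^ K * (1 + 1 / x) ^ K :=
        mul_le_mul_of_nonneg_left hber (by positivity)
      have h2 : x ^ K * (1 + (K : ℝ) * (1 / x)) = x ^ K * (x + K) / x := by
        field_simp
      have h3 : x ^ K * (1 + 1 / x) ^ K = (x + 1) ^ K := by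
        rw [← mul_pow, hxx]
      have h4 : x ^ K * (x + K) / x ≤ (x + 1) ^ K := by rw [← h2, ← h3]; exact h1
      have h5 : x ^ K * ((K : ℝ) + n) ≤ x ^ K * (x + K) := by
        apply mul_le_mul_of_nonneg_left _ (by positivity)
        rw [hx]; linarith
      calc x ^ K * ((K : ℝ) + n) ≤ x ^ K * (x + K) := h5
        _ = x * (x ^ K * (x + K) / x) := by field_simp
        _ ≤ x * (x + 1) ^ K := mul_le_mul_of_nonneg_left h4 hx0.le
    have hfn : (0 : ℝ) ≤ (n.factorial : ℝ) := by positivity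
    calc poch m (n + 1) = poch m n * (m + n) := poch_succ m n
      _ ≤ (n.factorial : ℝ) * x ^ K * (m + n) := by
          apply mul_le_mul_of_nonneg_right _ (by positivity)
          simpa [hx] using ih
      _ ≤ (n.factorial : ℝ) * x ^ K * ((K : ℝ) + n) := by
          apply mul_le_mul_of_nonneg_left _ (by positivity)
          linarith
      _ = (n.factorial : ℝ) * (x ^ K * ((K : ℝ) + n)) := by ring
      _ ≤ (n.factorial : ℝ) * (x * (x + 1) ^ K) := mul_le_mul_of_nonneg_left key hfn
      _ = ((n + 1).factorial : ℝ) * (((n + 1 : ℕ) : ℝ) + 1) ^ K := by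
          rw [Nat.factorial_succ]; push_cast [hx]; ring

lemma summable_aux (K : ℕ) {r : ℝ} (h0 : 0 < r) (h1 : r < 1) :
    Summable fun n : ℕ => ((n : ℝ) + 1) ^ K * r ^ n := by
  have h : Summable fun n : ℕ => (n : ℝ) ^ K * r ^ n :=
    summable_pow_mul_geometric_of_norm_lt_one K (by rwa [Real.norm_eq_abs, abs_of_pos h0])
  have h2 : Summable fun n : ℕ => ((n + 1 : ℕ) : ℝ) ^ K * r ^ (n + 1) :=
    (summable_nat_add_iff 1).2 h
  have h3 := h2.mul_right r⁻¹
  refine h3.congr fun n => ?_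
  push_cast
  rw [pow_succ]
  field_simp

lemma summable_d (K : ℕ) {w : ℝ} (hw : 1 ≤ w) :
    Summable fun i : ℕ => ((i : ℝ) + 1) ^ K * w ^ i / (i.factorial : ℝ) := by
  set f : ℕ → ℝ := fun i => ((i : ℝ) + 1) ^ K * w ^ i / (i.factorial : ℝ) with hf
  have hw0 : (0 : ℝ) < w := lt_of_lt_of_le one_pos hw
  have hfpos : ∀ i, 0 < f i := fun i => by
    have : (0 : ℝ) < (i.factorial : ℝ) := by exact_mod_cast i.factorial_pos
    positivity
  have hA : Tendsto (fun i : ℕ => (((i : ℝ) + 2) / ((i : ℝ) + 1)) ^ K * (w / ((i : ℝ) + 1)))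
      atTop (𝓝 0) := by
    have h1 : Tendsto (fun i : ℕ => 1 + 1 / ((i : ℝ) + 1)) atTop (𝓝 (1 + 0)) :=
      tendsto_const_nhds.add tendsto_one_div_add_atTop_nhds_zero_nat
    have h1' : Tendsto (fun i : ℕ => ((i : ℝ) + 2) / ((i : ℝ) + 1)) atTop (𝓝 1) := by
      rw [show (1 : ℝ) = 1 + 0 by norm_num]
      refine h1.congr fun i => ?_
      have : ((i : ℝ) + 1) ≠ 0 := by positivity
      field_simp
      ring
    have h2 : Tendsto (fun i : ℕ => w / ((i : ℝ) + 1)) atTop (𝓝 0) := by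
      have := tendsto_one_div_add_atTop_nhds_zero_nat.const_mul w
      rw [mul_zero] at this
      exact this.congr fun i => by rw [mul_one_div]
    have := (h1'.pow K).mul h2
    simpa using this
  apply summable_of_ratio_test_tendsto_lt_one one_pos
    (Eventually.of_forall fun i => (hfpos i).ne')
  refine hA.congr fun i => ?_
  rw [Real.norm_eq_abs, Real.norm_eq_abs, abs_of_pos (hfpos _), abs_of_pos (hfpos _), hf]
  have hfac : ((i.factorial : ℝ)) ≠ 0 := by exact_mod_cast i.factorial_ne_zero
  have hi1 : ((i : ℝ) + 1) ≠ 0 := by positivity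
  have hi2 : ((i : ℝ) + 2) ≠ 0 := by positivity
  simp only [Nat.factorial_succ]
  push_cast
  rw [div_pow]
  field_simp
  ring

lemma summable_kummer {m : ℝ} (hm : 0 < m) {z : ℝ} (hz : 0 ≤ z) :
    Summable fun i : ℕ => poch m i / ((i.factorial : ℝ)) ^ 2 * z ^ i := by
  refine Summable.of_nonneg_of_le (fun i => ?_) (fun i => ?_)
    (summable_d ⌈m⌉₊ (by linarith : (1 : ℝ) ≤ z + 1))
  · have h1 := poch_nonneg hm.le i
    have h2 : (0 : ℝ) < (i.factorial : ℝ) := by exact_mod_cast i.factorial_pos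
    positivity
  · have h2 : (0 : ℝ) < (i.factorial : ℝ) := by exact_mod_cast i.factorial_pos
    have hp : poch m i / ((i.factorial : ℝ)) ^ 2 ≤ ((i : ℝ) + 1) ^ (⌈m⌉₊) / (i.factorial : ℝ) := by
      rw [div_le_div_iff₀ (by positivity) h2]
      calc poch m i * (i.factorial : ℝ)
          ≤ ((i.factorial : ℝ) * ((i : ℝ) + 1) ^ (⌈m⌉₊)) * (i.factorial : ℝ) :=
            mul_le_mul_of_nonneg_right (poch_le hm i) h2.le
        _ = ((i : ℝ) + 1) ^ (⌈m⌉₊) * (i.factorial : ℝ) ^ 2 := by ring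
    have hz' : z ^ i ≤ (z + 1) ^ i := pow_le_pow_left₀ hz (by linarith) i
    calc poch m i / ((i.factorial : ℝ)) ^ 2 * z ^ i
        ≤ ((i : ℝ) + 1) ^ (⌈m⌉₊) / (i.factorial : ℝ) * z ^ i :=
          mul_le_mul_of_nonneg_right hp (by positivity)
      _ ≤ ((i : ℝ) + 1) ^ (⌈m⌉₊) / (i.factorial : ℝ) * (z + 1) ^ i :=
          mul_le_mul_of_nonneg_left hz' (by positivity)
      _ = ((i : ℝ) + 1) ^ (⌈m⌉₊) * (z + 1) ^ i / (i.factorial : ℝ) := by ring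

lemma c_le {m : ℝ} (hm : 0 < m) (n : ℕ) :
    poch m n / (n.factorial : ℝ) ≤ ((n : ℝ) + 1) ^ (⌈m⌉₊) := by
  have h2 : (0 : ℝ) < (n.factorial : ℝ) := by exact_mod_cast n.factorial_pos
  rw [div_le_iff₀ h2]
  calc poch m n ≤ (n.factorial : ℝ) * ((n : ℝ) + 1) ^ (⌈m⌉₊) := poch_le hm n
    _ = ((n : ℝ) + 1) ^ (⌈m⌉₊) * (n.factorial : ℝ) := by ring

lemma binom_hasSum {m : ℝ} (hm : 0 < m) {x : ℝ} (hx0 : 0 ≤ x) (hx1 : x < 1) :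
    HasSum (fun n : ℕ => poch m n / (n.factorial : ℝ) * x ^ n) ((1 - x) ^ (-m)) := by
  set K := ⌈m⌉₊ with hK
  set r : ℝ := (x + 1) / 2 with hr
  have hr0 : 0 < r := by rw [hr]; linarith
  have hr1 : r < 1 := by rw [hr]; linarith
  have hxr : x < r := by rw [hr]; linarith
  set c : ℕ → ℝ := fun n => poch m n / (n.factorial : ℝ) with hc
  have hc_nonneg : ∀ n, 0 ≤ c n := fun n => by
    have h1 := poch_nonneg hm.le n
    have h2 : (0 : ℝ) < (n.factorial : ℝ) := by exact_mod_cast n.factorial_pos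
    positivity
  set g : ℕ → ℝ → ℝ := fun n y => c n * y ^ n with hg_def
  set g' : ℕ → ℝ → ℝ := fun n y => c n * ((n : ℝ) * y ^ (n - 1)) with hg'_def
  set u : ℕ → ℝ := fun n => ((n : ℝ) + 1) ^ (K + 1) * r ^ n / r with hu_def
  have hu : Summable u := (summable_aux (K + 1) hr0 hr1).div_const r
  have hg : ∀ n y, HasDerivAt (g n) (g' n y) y := fun n y =>
    (hasDerivAt_pow n y).const_mul (c n)
  -- summability of g at any |y| ≤ r
  have hsum_g : ∀ y : ℝ, |y| ≤ r → Summable fun n => g n y := by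
    intro y hy
    apply Summable.of_abs
    refine Summable.of_nonneg_of_le (fun n => abs_nonneg _) (fun n => ?_) (summable_aux K hr0 hr1)
    rw [hg_def]
    simp only [abs_mul, abs_pow, abs_of_nonneg (hc_nonneg n)]
    have h1 : |y| ^ n ≤ r ^ n := pow_le_pow_left₀ (abs_nonneg y) hy n
    exact mul_le_mul (c_le hm n) h1 (by positivity) (by positivity)
  -- bound on derivatives
  have hg'_bound : ∀ n y, y ∈ Ioo (-r) r → ‖g' n y‖ ≤ u n := by
    intro n y hy
    have hyr : |y| ≤ r := le_of_lt (abs_lt.2 ⟨hy.1, hy.2⟩)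
    rw [hg'_def, hu_def, Real.norm_eq_abs]
    simp only [abs_mul, abs_pow, abs_of_nonneg (hc_nonneg n), Nat.abs_cast]
    match n with
    | 0 => simp; positivity
    | (j+1) =>
      have h1 : |y| ^ (j + 1 - 1) ≤ r ^ j := by
        simpa using pow_le_pow_left₀ (abs_nonneg y) hyr j
      have h2 : c (j + 1) ≤ ((j : ℝ) + 1 + 1) ^ K := by
        simpa [Nat.cast_succ] using c_le hm (j + 1)
      have h3 : r ^ (j + 1) / r = r ^ j := by
        rw [pow_succ]; field_simp
      rw [mul_div_assoc, h3]
      push_cast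
      calc c (j + 1) * (((j : ℝ) + 1) * |y| ^ (j + 1 - 1))
          ≤ ((j : ℝ) + 1 + 1) ^ K * (((j : ℝ) + 1) * r ^ j) := by
            apply mul_le_mul h2 _ (by positivity) (by positivity)
            exact mul_le_mul_of_nonneg_left h1 (by positivity)
        _ ≤ ((j : ℝ) + 1 + 1) ^ K * (((j : ℝ) + 1 + 1) * r ^ j) := by
            apply mul_le_mul_of_nonneg_left _ (by positivity)
            apply mul_le_mul_of_nonneg_right (by linarith) (by positivity)
        _ = ((j : ℝ) + 1 + 1) ^ (K + 1) * r ^ j := by ring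
  have h0t : (0 : ℝ) ∈ Ioo (-r) r := ⟨by linarith, hr0⟩
  have hg0 : Summable fun n => g n 0 := hsum_g 0 (by simp [hr0.le])
  -- the sum function and its derivative
  set S : ℝ → ℝ := fun y => ∑' n, g n y with hS_def
  have hD : ∀ y ∈ Ioo (-r) r, HasDerivAt S (∑' n, g' n y) y := fun y hy =>
    hasDerivAt_tsum_of_isPreconnected hu isOpen_Ioo (convex_Ioo (-r) r).isPreconnected
      (fun n y _ => hg n y) hg'_bound h0t hg0 hy
  -- the ODE
  have hODE : ∀ y ∈ Ioo (-r) r, (1 - y) * (∑' n, g' n y) = m * S y := by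
    intro y hy
    have hyr : |y| ≤ r := le_of_lt (abs_lt.2 ⟨hy.1, hy.2⟩)
    have hs' : Summable fun n => g' n y :=
      Summable.of_norm_bounded hu (fun n => hg'_bound n y hy)
    have hsg : Summable fun n => g n y := hsum_g y hyr
    have e0 : ∑' n, g' n y = ∑' n, g' (n + 1) y := by
      rw [Summable.tsum_eq_zero_add hs']
      simp [hg'_def]
    have e1 : ∀ n : ℕ, g' (n + 1) y = m * g n y + y * g' n y := by
      intro n
      have hfac : ((n.factorial : ℝ)) ≠ 0 := by exact_mod_cast n.factorial_ne_zero
      have hc1 : c (n + 1) * ((n : ℝ) + 1) = c n * (m + n) := by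
        simp only [hc]
        rw [poch_succ, Nat.factorial_succ]
        push_cast
        field_simp
      have hyn : y * ((n : ℝ) * y ^ (n - 1)) = (n : ℝ) * y ^ n := by
        match n with
        | 0 => simp
        | (j+1) => push_cast; ring
      rw [hg'_def, hg_def]
      simp only [Nat.cast_add, Nat.cast_one, Nat.add_sub_cancel]
      calc c (n + 1) * (((n : ℝ) + 1) * y ^ n) = (c (n + 1) * ((n : ℝ) + 1)) * y ^ n := by ring
        _ = (c n * (m + n)) * y ^ n := by rw [hc1]
        _ = m * (c n * y ^ n) + c n * ((n : ℝ) * y ^ n) := by ring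
        _ = m * (c n * y ^ n) + y * (c n * ((n : ℝ) * y ^ (n - 1))) := by rw [← hyn]; ring
    have e2 : ∑' n, g' (n + 1) y = m * S y + y * ∑' n, g' n y := by
      calc ∑' n, g' (n + 1) y = ∑' n, (m * g n y + y * g' n y) := tsum_congr e1
        _ = (∑' n, m * g n y) + ∑' n, y * g' n y :=
            Summable.tsum_add (hsg.mul_left m) (hs'.mul_left y)
        _ = m * S y + y * ∑' n, g' n y := by rw [tsum_mul_left, tsum_mul_left, hS_def]
    have := e0.trans e2
    linarith [this]
  -- φ := S * (1-y)^m has zero derivative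
  have hφ : ∀ y ∈ Ioo (-r) r, HasDerivAt (fun z => S z * (1 - z) ^ m) 0 y := by
    intro y hy
    have h1y : 0 < 1 - y := by have := hy.2; linarith
    have hpow : HasDerivAt (fun z : ℝ => (1 - z) ^ m) (-(m * (1 - y) ^ (m - 1))) y := by
      have hsub : HasDerivAt (fun z : ℝ => 1 - z) (-1) y := (hasDerivAt_id y).const_sub 1
      have := hsub.rpow_const (p := m) (Or.inl h1y.ne')
      simpa using this
    have hmul := (hD y hy).mul hpow
    have hval : (∑' n, g' n y) * (1 - y) ^ m + S y * -(m * (1 - y) ^ (m - 1)) = 0 := by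
      have hsplit : (1 - y) ^ m = (1 - y) ^ (m - 1) * (1 - y) := by
        rw [← Real.rpow_add_one h1y.ne' (m - 1)]
        norm_num
      rw [hsplit]
      have h5 := hODE y hy
      linear_combination ((1 - y) ^ (m - 1)) * h5
    rwa [hval] at hmul
  -- constancy
  have hxt : x ∈ Ioo (-r) r := ⟨by linarith, hxr⟩
  have hconst : S x * (1 - x) ^ m = S 0 * (1 - 0 : ℝ) ^ m := by
    have := (convex_Ioo (-r) r).norm_image_sub_le_of_norm_hasDerivWithin_le
      (f := fun z => S z * (1 - z) ^ m) (f' := fun _ => 0) (C := 0)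
      (fun y hy => (hφ y hy).hasDerivWithinAt) (fun y _ => by simp) hxt h0t
    simp only [zero_mul, norm_le_zero_iff, sub_eq_zero] at this
    exact this.symm
  have hS0 : S 0 = 1 := by
    have h6 : (∑' n, g n 0) = 1 := by
      rw [tsum_eq_single 0 (fun n hn => by simp [hg_def, zero_pow hn])]
      simp [hg_def, hc, poch_zero]
    exact h6
  rw [hS0, one_mul, sub_zero, Real.one_rpow] at hconst
  have hpos : (0 : ℝ) < (1 - x) ^ m := Real.rpow_pos_of_pos (by linarith) m
  have hSx : S x = (1 - x) ^ (-m) := by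
    rw [Real.rpow_neg (by linarith : (0:ℝ) ≤ 1 - x)]
    field_simp
    linarith [hconst]
  have hfinal : HasSum (fun n => poch m n / (n.factorial : ℝ) * x ^ n) (S x) :=
    (hsum_g x (by rw [abs_of_nonneg hx0]; exact hxr.le)).hasSum
  rwa [hSx] at hfinal

/-- Laplace transform of `₁F₁(m, 1, b·)` at `a`: for `m > 0` and `0 ≤ b < a`,
`∫₀^∞ e^{−aγ} ₁F₁(m,1,bγ) dγ = a^{m−1}/(a−b)^m`. -/
theorem laplace_kummerM (m a b : ℝ) (hm : 0 < m) (hb : 0 ≤ b) (hab : b < a) :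
    IntegrableOn (fun γ : ℝ => Real.exp (-a * γ) * kummerM m (b * γ)) (Ioi 0) ∧
    ∫ γ in Ioi (0 : ℝ), Real.exp (-a * γ) * kummerM m (b * γ) =
      a ^ (m - 1) / (a - b) ^ m := by
  have ha : 0 < a := lt_of_le_of_lt hb hab
  set x : ℝ := b / a with hx
  have hx0 : 0 ≤ x := div_nonneg hb ha.le
  have hx1 : x < 1 := (div_lt_one ha).2 hab
  set F : ℕ → ℝ → ℝ := fun i γ =>
    poch m i / ((i.factorial : ℝ)) ^ 2 * b ^ i * (γ ^ i * Real.exp (-a * γ)) with hF_def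
  set f : ℝ → ℝ := fun γ => Real.exp (-a * γ) * kummerM m (b * γ) with hf_def
  -- pointwise HasSum
  have claim_pt : ∀ γ : ℝ, γ ∈ Ioi (0:ℝ) → HasSum (fun i => F i γ) (f γ) := by
    intro γ hγ
    have hγ0 : (0:ℝ) < γ := hγ
    have h1 : HasSum (fun i => poch m i / ((i.factorial : ℝ)) ^ 2 * (b * γ) ^ i)
        (kummerM m (b * γ)) := (summable_kummer hm (by positivity)).hasSum
    have h2 := h1.mul_left (Real.exp (-a * γ))
    have h3 : (fun i => Real.exp (-a * γ) * (poch m i / ((i.factorial : ℝ)) ^ 2 * (b * γ) ^ i))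
        = fun i => F i γ := by
      funext i
      rw [hF_def]
      rw [mul_pow]
      ring
    rw [h3] at h2
    exact h2
  -- integrability of each piece
  have claim_int : ∀ i : ℕ, IntegrableOn (fun γ : ℝ => γ ^ i * Real.exp (-a * γ)) (Ioi 0) := by
    intro i
    have h := integrableOn_rpow_mul_exp_neg_mul_rpow (p := 1) (s := (i:ℝ))
      (b := a) (by exact_mod_cast lt_of_lt_of_le neg_one_lt_zero (Nat.cast_nonneg i)) one_pos ha
    simpa [Real.rpow_natCast, Real.rpow_one] using h
  have claim_FInt : ∀ i : ℕ, IntegrableOn (F i) (Ioi 0) := by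
    intro i
    exact (claim_int i).const_mul _
  -- value of each integral
  have claim_val : ∀ i : ℕ, ∫ γ in Ioi (0:ℝ), γ ^ i * Real.exp (-a * γ)
      = (i.factorial : ℝ) / a ^ (i + 1) := by
    intro i
    have h := integral_rpow_mul_exp_neg_mul_Ioi (a := (i:ℝ) + 1) (r := a) (by positivity) ha
    rw [show ((i:ℝ) + 1 - 1) = (i:ℝ) by ring] at h
    have heq : ∀ γ ∈ Ioi (0:ℝ), γ ^ (i:ℝ) * Real.exp (-(a * γ)) = γ ^ i * Real.exp (-a * γ) := by
      intro γ _
      rw [Real.rpow_natCast, neg_mul]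
    rw [setIntegral_congr_fun measurableSet_Ioi heq] at h
    rw [h]
    have hg : Real.Gamma ((i:ℝ) + 1) = (i.factorial : ℝ) := Real.Gamma_nat_eq_factorial i
    rw [hg, show ((i:ℝ) + 1) = ((i + 1 : ℕ) : ℝ) by push_cast; ring, Real.rpow_natCast]
    rw [one_div, inv_pow]
    field_simp
  -- w
  set w : ℕ → ℝ := fun i => poch m i / ((i.factorial : ℝ)) ^ 2 * b ^ i
    * ((i.factorial : ℝ) / a ^ (i + 1)) with hw_def
  have hw_nonneg : ∀ i, 0 ≤ w i := by
    intro i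
    have h1 := poch_nonneg hm.le i
    have h2 : (0 : ℝ) < (i.factorial : ℝ) := by exact_mod_cast i.factorial_pos
    positivity
  have hw_eq : ∀ i, w i = a⁻¹ * (poch m i / (i.factorial : ℝ) * x ^ i) := by
    intro i
    have hfac : ((i.factorial : ℝ)) ≠ 0 := by exact_mod_cast i.factorial_ne_zero
    simp only [hw_def, hx]
    rw [div_pow, pow_succ]
    field_simp
    ring
  have hbin := binom_hasSum hm hx0 hx1
  have hsum_w : Summable w := by
    refine ((hbin.summable).mul_left a⁻¹).congr fun i => (hw_eq i).symm
  have htsum_w : ∑' i, w i = a⁻¹ * (1 - x) ^ (-m) := by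
    rw [tsum_congr hw_eq, tsum_mul_left, hbin.tsum_eq]
  -- norm integrals
  have claim_norm : ∀ i : ℕ, ∫ γ in Ioi (0:ℝ), ‖F i γ‖ = w i := by
    intro i
    have h1 := poch_nonneg hm.le i
    have h2 : (0 : ℝ) < (i.factorial : ℝ) := by exact_mod_cast i.factorial_pos
    have heq : ∀ γ ∈ Ioi (0:ℝ), ‖F i γ‖ = F i γ := by
      intro γ hγ
      have hγ0 : (0:ℝ) < γ := hγ
      rw [Real.norm_eq_abs, abs_of_nonneg]
      rw [hF_def]
      positivity
    rw [setIntegral_congr_fun measurableSet_Ioi heq]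
    rw [hF_def, hw_def]
    simp only []
    rw [MeasureTheory.integral_const_mul, claim_val i]
  -- measurability
  have hmeas_F : ∀ i : ℕ, AEStronglyMeasurable (F i) (volume.restrict (Ioi 0)) := by
    intro i
    apply Continuous.aestronglyMeasurable
    have hc1 : Continuous fun γ : ℝ => Real.exp (-a * γ) :=
      ((continuous_const.mul continuous_id).rexp : Continuous fun γ : ℝ => Real.exp (-a * γ))
    exact continuous_const.mul ((continuous_pow i).mul hc1)
  have hmeas_f : AEStronglyMeasurable f (volume.restrict (Ioi 0)) := by
    apply aestronglyMeasurable_of_tendsto_ae atTop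
      (f := fun n γ => ∑ i ∈ Finset.range n, F i γ)
    · intro n
      apply Finset.aestronglyMeasurable_fun_sum
      intro i _
      exact hmeas_F i
    · filter_upwards [ae_restrict_mem measurableSet_Ioi] with γ hγ
      exact (claim_pt γ hγ).tendsto_sum_nat
  -- integrability
  have hInt : IntegrableOn f (Ioi 0) := by
    refine ⟨hmeas_f, ?_⟩
    rw [hasFiniteIntegral_iff_norm]
    calc ∫⁻ γ in Ioi (0:ℝ), ENNReal.ofReal ‖f γ‖
        ≤ ∫⁻ γ in Ioi (0:ℝ), ∑' i, ENNReal.ofReal ‖F i γ‖ := by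
          apply lintegral_mono_ae
          filter_upwards [ae_restrict_mem measurableSet_Ioi] with γ hγ
          have hsum : Summable fun i => ‖F i γ‖ := by
            refine ((claim_pt γ hγ).summable).congr fun i => ?_
            rw [Real.norm_eq_abs, abs_of_nonneg]
            have h1 := poch_nonneg hm.le i
            have h2 : (0 : ℝ) < (i.factorial : ℝ) := by exact_mod_cast i.factorial_pos
            have hγ0 : (0:ℝ) < γ := hγ
            rw [hF_def]; positivity
          calc ENNReal.ofReal ‖f γ‖ ≤ ENNReal.ofReal (∑' i, ‖F i γ‖) := by
                apply ENNReal.ofReal_le_ofReal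
                rw [← (claim_pt γ hγ).tsum_eq]
                exact norm_tsum_le_tsum_norm hsum
            _ = ∑' i, ENNReal.ofReal ‖F i γ‖ :=
                ENNReal.ofReal_tsum_of_nonneg (fun i => norm_nonneg _) hsum
      _ = ∑' i, ∫⁻ γ in Ioi (0:ℝ), ENNReal.ofReal ‖F i γ‖ := by
          apply lintegral_tsum
          intro i
          exact (ENNReal.measurable_ofReal.comp_aemeasurable (hmeas_F i).norm.aemeasurable)
      _ = ∑' i, ENNReal.ofReal (w i) := by
          refine tsum_congr fun i => ?_
          simp_rw [ofReal_norm]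
          rw [← ofReal_integral_norm_eq_lintegral_enorm (claim_FInt i), claim_norm i]
      _ = ENNReal.ofReal (∑' i, w i) := (ENNReal.ofReal_tsum_of_nonneg hw_nonneg hsum_w).symm
      _ < ⊤ := ENNReal.ofReal_lt_top
  refine ⟨hInt, ?_⟩
  have h2 : ∀ i : ℕ, ∫ γ in Ioi (0:ℝ), F i γ = w i := by
    intro i
    rw [hF_def, hw_def]
    simp only []
    rw [MeasureTheory.integral_const_mul, claim_val i]
  have h1 : ∫ γ in Ioi (0:ℝ), f γ = ∑' i, ∫ γ in Ioi (0:ℝ), F i γ := by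
    rw [setIntegral_congr_fun measurableSet_Ioi
      (fun γ hγ => ((claim_pt γ hγ).tsum_eq).symm : EqOn f (fun γ => ∑' i, F i γ) (Ioi 0))]
    exact (integral_tsum_of_summable_integral_norm claim_FInt
      (hsum_w.congr fun i => (claim_norm i).symm)).symm
  have hgoal : ∫ γ in Ioi (0:ℝ), f γ = a ^ (m - 1) / (a - b) ^ m := by
    rw [h1, tsum_congr h2, htsum_w]
    have hab0 : 0 < a - b := by linarith
    have h3 : (1 : ℝ) - x = (a - b) / a := by rw [hx]; field_simp
    rw [h3, Real.div_rpow hab0.le ha.le]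
    rw [Real.rpow_neg hab0.le, Real.rpow_neg ha.le, Real.rpow_sub ha, Real.rpow_one]
    have h4 : ((a - b) ^ m) ≠ 0 := (Real.rpow_pos_of_pos hab0 m).ne'
    have h5 : (a ^ m) ≠ 0 := (Real.rpow_pos_of_pos ha m).ne'
    field_simp
  exact hgoal
end

section
/- For every real m > 0 and every z > 0, the series ∑_{i=0}^∞ ((m)_i / i!) · z^i · U(m+i, i, z) converges and equals 1/Γ(m+1). -/
open MeasureTheory Set

/-- Kummer confluent hypergeometric function of the second kind
`U(a, b, z) = (1/Γ(a)) ∫₀^∞ e^{−zt} t^{a−1} (1+t)^{b−a−1} dt`. -/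
noncomputable def kummerU (a b z : ℝ) : ℝ :=
  (1 / Real.Gamma a) *
    ∫ t in Ioi (0 : ℝ), Real.exp (-z * t) * t ^ (a - 1) * (1 + t) ^ (b - a - 1)

open Filter Topology

-- FTC piece
lemma base_pieces (m : ℝ) (hm : 0 < m) :
    IntegrableOn (fun t : ℝ => t ^ (m-1) * (1+t) ^ (-m-1)) (Ioi (0:ℝ)) ∧
    ∫ t in Ioi (0:ℝ), t ^ (m-1) * (1+t) ^ (-m-1) = 1/m := by
  set G : ℝ → ℝ := fun t => (1/m) * (t/(1+t)) ^ m with hG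
  have hderiv : ∀ x ∈ Ioi (0:ℝ), HasDerivAt G (x ^ (m-1) * (1+x) ^ (-m-1)) x := by
    intro x hx
    have hx0 : 0 < x := hx
    have h1x : (0:ℝ) < 1 + x := by linarith
    have hu : HasDerivAt (fun t : ℝ => t/(1+t)) ((1*(1+x) - x*1)/(1+x)^2) x :=
      (hasDerivAt_id x).div ((hasDerivAt_id x).const_add 1) h1x.ne'
    have hne : x/(1+x) ≠ 0 := by positivity
    have h2 := (hu.rpow_const (p := m) (Or.inl hne)).const_mul (1/m)
    refine h2.congr_deriv ?_
    symm
    rw [Real.div_rpow hx0.le h1x.le]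
    have e1 : (1+x) ^ (-m-1) = ((1+x) ^ (m-1))⁻¹ * ((1+x)^2)⁻¹ := by
      rw [← Real.rpow_natCast (1+x) 2, ← Real.rpow_neg h1x.le, ← Real.rpow_neg h1x.le,
        ← Real.rpow_add h1x]
      ring_nf
    rw [e1]
    field_simp
    ring_nf
    try tauto
  have hcont : ContinuousWithinAt G (Ici (0:ℝ)) 0 := by
    apply ContinuousAt.continuousWithinAt
    have : ContinuousAt (fun t : ℝ => t/(1+t)) 0 := by
      apply ContinuousAt.div continuousAt_id (continuousAt_const.add continuousAt_id)
      norm_num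
    exact (this.rpow_const (Or.inr hm.le)).const_mul _
  have hpos : ∀ x ∈ Ioi (0:ℝ), 0 ≤ x ^ (m-1) * (1+x) ^ (-m-1) := by
    intro x hx
    have hx0 : (0:ℝ) < x := hx
    positivity
  have htend : Tendsto G atTop (𝓝 (1/m)) := by
    have h1 : Tendsto (fun t : ℝ => t/(1+t)) atTop (𝓝 1) := by
      have h0 : Tendsto (fun t : ℝ => (1+t)⁻¹) atTop (𝓝 0) :=
        (tendsto_atTop_add_const_left atTop 1 tendsto_id).inv_tendsto_atTop
      have h2 : Tendsto (fun t : ℝ => 1 - (1+t)⁻¹) atTop (𝓝 (1 - 0)) :=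
        tendsto_const_nhds.sub h0
      rw [sub_zero] at h2
      refine h2.congr' ?_
      filter_upwards [eventually_ge_atTop (1:ℝ)] with t ht
      have : (1:ℝ) + t ≠ 0 := by linarith
      field_simp
      ring
    have h3 := (h1.rpow_const (Or.inr hm.le)).const_mul (1/m)
    rw [Real.one_rpow, mul_one] at h3
    exact h3
  have hG0 : G 0 = 0 := by
    simp [hG, Real.zero_rpow hm.ne']
  constructor
  · exact integrableOn_Ioi_deriv_of_nonneg hcont hderiv hpos htend
  · rw [integral_Ioi_of_hasDerivAt_of_nonneg hcont hderiv hpos htend, hG0, sub_zero]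


-- poch identity
lemma gamma_poch (m : ℝ) (hm : 0 < m) (i : ℕ) :
    Real.Gamma (m + i) = Real.Gamma m * poch m i := by
  induction i with
  | zero => simp [poch]
  | succ n ih =>
    have hmn : m + n ≠ 0 := by positivity
    have : (m : ℝ) + (n+1 : ℕ) = (m + n) + 1 := by push_cast; ring
    rw [this, Real.Gamma_add_one hmn, ih]
    simp only [poch, Finset.prod_range_succ]
    ring



/-- For `m > 0` and `z > 0`,
`∑_{i=0}^∞ ((m)_i / i!) z^i U(m+i, i, z) = 1/Γ(m+1)`. -/
theorem sum_poch_kummerU (m z : ℝ) (hm : 0 < m) (hz : 0 < z) :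
    HasSum (fun i : ℕ => poch m i / (Nat.factorial i : ℝ) * z ^ i * kummerU (m + i) i z)
      (1 / Real.Gamma (m + 1)) := by
  obtain ⟨hBint, hBval⟩ := base_pieces m hm
  set B : ℝ → ℝ := fun t => t ^ (m-1) * (1+t) ^ (-m-1) with hBdef
  set g : ℕ → ℝ → ℝ := fun i t =>
    (z*t)^i / (Nat.factorial i : ℝ) * (Real.exp (-z*t) * B t) with hgdef
  -- pointwise sum
  have hexps : ∀ t : ℝ, HasSum (fun i : ℕ => g i t) (B t) := by
    intro t
    have h := NormedSpace.expSeries_div_hasSum_exp (z*t)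
    rw [← Real.exp_eq_exp_ℝ] at h
    have h2 := h.mul_right (Real.exp (-z*t) * B t)
    have : Real.exp (z*t) * (Real.exp (-z*t) * B t) = B t := by
      rw [← mul_assoc, ← Real.exp_add]
      simp [neg_mul]
    rwa [this] at h2
  -- nonnegativity on Ioi 0
  have hnonneg : ∀ i : ℕ, ∀ t ∈ Ioi (0:ℝ), 0 ≤ g i t := by
    intro i t ht
    have ht0 : (0:ℝ) < t := ht
    have h1 : (0:ℝ) ≤ (z*t)^i := pow_nonneg (by positivity) i
    have h2 : (0:ℝ) ≤ B t := by
      rw [hBdef]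
      positivity
    have h3 : (0:ℝ) < (Nat.factorial i : ℝ) := by positivity
    positivity
  -- bound : each term ≤ B t on Ioi 0  (and partial sums too)
  have hpartial : ∀ (n : ℕ) (t : ℝ), t ∈ Ioi (0:ℝ) →
      ∑ i ∈ Finset.range n, g i t ≤ B t := by
    intro n t ht
    exact sum_le_hasSum _ (fun i _ => hnonneg i t ht) (hexps t)
  have hle : ∀ i : ℕ, ∀ t ∈ Ioi (0:ℝ), g i t ≤ B t := by
    intro i t ht
    exact le_hasSum (hexps t) i (fun j _ => hnonneg j t ht)
  -- measurability
  have hmeas : ∀ i : ℕ, AEStronglyMeasurable (g i) (volume.restrict (Ioi (0:ℝ))) := by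
    intro i
    apply Measurable.aestronglyMeasurable
    rw [hgdef, hBdef]
    fun_prop
  -- integrability of each g i
  have hint : ∀ i : ℕ, IntegrableOn (g i) (Ioi (0:ℝ)) := by
    intro i
    refine hBint.mono' (hmeas i) ?_
    rw [ae_restrict_iff' measurableSet_Ioi]
    filter_upwards with t ht
    rw [Real.norm_eq_abs, abs_of_nonneg (hnonneg i t ht)]
    exact hle i t ht
  -- HasSum of the integrals
  have key : HasSum (fun i : ℕ => ∫ t in Ioi (0:ℝ), g i t) (1/m) := by
    have hnn : ∀ i : ℕ, 0 ≤ ∫ t in Ioi (0:ℝ), g i t := fun i =>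
      setIntegral_nonneg measurableSet_Ioi (hnonneg i)
    rw [hasSum_iff_tendsto_nat_of_nonneg hnn, ← hBval]
    have htendsto := integral_tendsto_of_tendsto_of_monotone
      (μ := volume.restrict (Ioi (0:ℝ)))
      (f := fun n t => ∑ i ∈ Finset.range n, g i t) (F := B)
      (fun n => integrable_finset_sum _ (fun i _ => hint i)) hBint ?_ ?_
    · refine htendsto.congr fun n => ?_
      rw [integral_finset_sum _ (fun i _ => hint i)]
    · rw [ae_restrict_iff' measurableSet_Ioi]
      filter_upwards with t ht
      intro a b hab
      exact Finset.sum_le_sum_of_subset_of_nonneg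
        (Finset.range_subset_range.2 hab) (fun i _ _ => hnonneg i t ht)
    · filter_upwards with t
      exact (hexps t).tendsto_sum_nat
  -- per-term identity
  have hcong : ∀ i : ℕ, ∫ t in Ioi (0:ℝ), g i t
      = z^i / (Nat.factorial i : ℝ) *
        ∫ t in Ioi (0:ℝ), Real.exp (-z*t) * t ^ ((m+(i:ℝ)) - 1) * (1+t) ^ (-m - 1) := by
    intro i
    rw [← integral_const_mul]
    apply setIntegral_congr_fun measurableSet_Ioi
    intro t ht
    have ht0 : (0:ℝ) < t := ht
    have hfac : (0:ℝ) < (Nat.factorial i : ℝ) := by positivity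
    have hpow : t ^ ((m+(i:ℝ)) - 1) = t ^ (m-1) * t ^ i := by
      rw [← Real.rpow_natCast t i, ← Real.rpow_add ht0]
      ring_nf
    simp only [hgdef, hBdef]
    rw [hpow, mul_pow]
    field_simp
  have hterm : ∀ i : ℕ,
      poch m i / (Nat.factorial i : ℝ) * z ^ i * kummerU (m + i) i z
      = (1/Real.Gamma m) * ∫ t in Ioi (0:ℝ), g i t := by
    intro i
    have hmi : (0:ℝ) < m + i := by positivity
    have hgam : Real.Gamma (m + i) = Real.Gamma m * poch m i := gamma_poch m hm i
    have hΓm : Real.Gamma m ≠ 0 := (Real.Gamma_pos_of_pos hm).ne'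
    have hpoch : (0:ℝ) < poch m i := by
      rw [poch]
      apply Finset.prod_pos
      intro j _
      positivity
    have hfac : (0:ℝ) < (Nat.factorial i : ℝ) := by positivity
    have hexp : ((i:ℝ) - (m + i) - 1 : ℝ) = -m - 1 := by ring
    rw [kummerU, hexp, hcong i, hgam]
    field_simp
  have h2 : (1/Real.Gamma m) * (1/m) = 1/Real.Gamma (m+1) := by
    rw [Real.Gamma_add_one hm.ne']
    rw [one_div_mul_one_div]
    rw [mul_comm (Real.Gamma m) m]
  have hfinal := key.mul_left (1/Real.Gamma m)
  rw [h2] at hfinal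
  simp only [hterm]
  exact hfinal
end
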